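/- Let A = [[a,b],[c,d]] ∈ ℝ^{2×2} satisfy det A = ad − bc = 0 and a, d > max{0, b, c}, and set ρ₁ = (d−c)/(a−b), ρ₂ = (d−b)/(a−c). Let y = (y₁, y₂) ∈ ℝ² × ℝ² satisfy y₁₂ = −ρ₁·y₁₁ and y₂₂ = −ρ₂·y₂₁, and set z = (y₁₁, y₂₁) ∈ ℝ². Then Ψ(y) = ψ(z), where Ψ is the energy on ℝ⁴ and ψ is the subspace energy on ℝ². -/

import Mathlib

open Matrix

/-- The open quadrants `P₁, P₂, P₃, P₄` (0-indexed: `Pset 0 = P₁`, …, `Pset 3 = P₄`). -/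
def Pset : Fin 4 → Set (ℝ × ℝ) :=
  ![{z | z.1 < 0 ∧ z.2 < 0}, {z | z.1 < 0 ∧ 0 < z.2},
    {z | 0 < z.1 ∧ 0 < z.2}, {z | 0 < z.1 ∧ z.2 < 0}]

/-- The boundary rays: `Pbd i = P_{i∼(i+1)}` (0-indexed: `Pbd 0 = P₁∼₂`, `Pbd 1 = P₂∼₃`,
`Pbd 2 = P₃∼₄`, `Pbd 3 = P₄∼₁`). -/
def Pbd : Fin 4 → Set (ℝ × ℝ) :=
  ![{z | z.1 < 0 ∧ z.2 = 0}, {z | z.1 = 0 ∧ 0 < z.2},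
    {z | 0 < z.1 ∧ z.2 = 0}, {z | z.1 = 0 ∧ z.2 < 0}]

/-- `P̂ᵢ = Pᵢ ∪ Pᵢ∼ᵢ₊₁`. -/
def Phat (i : Fin 4) : Set (ℝ × ℝ) := Pset i ∪ Pbd i

/-- The subspace energy `ψ`: `ψ((0,0)) = 0`, `ψ(z) = −ρ₁z₁ − ρ₂z₂` on `P̂₁`,
`−ρ₁z₁ + z₂` on `P̂₂`, `z₁ + z₂` on `P̂₃`, `z₁ − ρ₂z₂` on `P̂₄`
(note `P̂₁ = {z₁<0, z₂≤0}`, `P̂₂ = {z₁≤0, z₂>0}`, `P̂₃ = {z₁>0, z₂≥0}`,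
`P̂₄ = {z₁≥0, z₂<0}`). -/
noncomputable def psi (ρ₁ ρ₂ : ℝ) (z : ℝ × ℝ) : ℝ :=
  if z.1 < 0 ∧ z.2 ≤ 0 then -ρ₁ * z.1 - ρ₂ * z.2
  else if z.1 ≤ 0 ∧ 0 < z.2 then -ρ₁ * z.1 + z.2
  else if 0 < z.1 ∧ 0 ≤ z.2 then z.1 + z.2
  else if 0 ≤ z.1 ∧ z.2 < 0 then z.1 - ρ₂ * z.2
  else 0

/-- The columns of `S = [[b, a, a, b], [−c, −c, −a, −a]]`. -/
def Scol (a b c : ℝ) : Fin 4 → ℝ × ℝ :=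
  ![(b, -c), (a, -c), (a, -a), (b, -a)]

/-- The threshold `B = min{ β ≥ 0 : ψ(z) ≤ β for all z with ‖z‖₁ ≤ 6·a_max }`. -/
noncomputable def Bconst (ρ₁ ρ₂ amax : ℝ) : ℝ :=
  sInf {β : ℝ | 0 ≤ β ∧ ∀ z : ℝ × ℝ, |z.1| + |z.2| ≤ 6 * amax → psi ρ₁ ρ₂ z ≤ β}

/-- A choice map `Q` (encoding the argmax with arbitrary tiebreaking):
`Q((0,0)) = e₁`, `Q(z) = eᵢ` on `Pᵢ`, and `Q(z) ∈ {eᵢ, eᵢ₊₁}` on `Pᵢ∼ᵢ₊₁`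
(we record the index of the chosen standard basis vector, 0-indexed). -/
def IsChoiceMap (Q : ℝ × ℝ → Fin 4) : Prop :=
  Q (0, 0) = 0 ∧
  (∀ i : Fin 4, ∀ z ∈ Pset i, Q z = i) ∧
  (∀ i : Fin 4, ∀ z ∈ Pbd i, Q z = i ∨ Q z = i + 1)

/-- The energy function `Ψ(y₁, y₂) = max_{(x₁,x₂) ∈ Δ₂ × Δ₂} (⟨x₁,y₁⟩ + ⟨x₂,y₂⟩)` on ℝ⁴. -/
noncomputable def energy (y₁ y₂ : Fin 2 → ℝ) : ℝ :=
  ⨆ p : ↥(stdSimplex ℝ (Fin 2)) × ↥(stdSimplex ℝ (Fin 2)),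
    (p.1 : Fin 2 → ℝ) ⬝ᵥ y₁ + (p.2 : Fin 2 → ℝ) ⬝ᵥ y₂

/- Ψ is additive over the two simplices and a linear form on a simplex is maximised at a vertex, so
Ψ(y₁, y₂) = max(y₁₁, y₁₂) + max(y₂₁, y₂₂). On the subspace each summand has the form
max(u, −ρu), and since ρ₁, ρ₂ ≥ 0 (as a, d exceed b, c) this is −ρu for u ≤ 0 and u for u ≥ 0,
which is ψ quadrant by quadrant. -/

lemma dotProduct_le_of_mem_stdSimplex {ι : Type*} [Fintype ι] {x y : ι → ℝ} {M : ℝ}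
    (hx : x ∈ stdSimplex ℝ ι) (hy : ∀ i, y i ≤ M) : x ⬝ᵥ y ≤ M :=
  calc x ⬝ᵥ y = ∑ i, x i * y i := rfl
    _ ≤ ∑ i, x i * M := Finset.sum_le_sum fun i _ => mul_le_mul_of_nonneg_left (hy i) (hx.1 i)
    _ = M := by rw [← Finset.sum_mul, hx.2, one_mul]

lemma exists_eq_max_fin_two (y : Fin 2 → ℝ) : ∃ i, y i = max (y 0) (y 1) := by
  rcases max_choice (y 0) (y 1) with h | h
  exacts [⟨0, h.symm⟩, ⟨1, h.symm⟩]

lemma energy_eq_max_add_max (y₁ y₂ : Fin 2 → ℝ) :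
    energy y₁ y₂ = max (y₁ 0) (y₁ 1) + max (y₂ 0) (y₂ 1) := by
  have hle (x : stdSimplex ℝ (Fin 2)) (y : Fin 2 → ℝ) : (x : Fin 2 → ℝ) ⬝ᵥ y ≤ max (y 0) (y 1) :=
    dotProduct_le_of_mem_stdSimplex x.2 fun i => by fin_cases i <;> simp
  obtain ⟨i₁, hi₁⟩ := exists_eq_max_fin_two y₁
  obtain ⟨i₂, hi₂⟩ := exists_eq_max_fin_two y₂
  let vertex (i : Fin 2) : stdSimplex ℝ (Fin 2) := ⟨Pi.single i 1, single_mem_stdSimplex ℝ i⟩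
  refine le_antisymm (ciSup_le fun p => add_le_add (hle p.1 y₁) (hle p.2 y₂)) ?_
  refine le_ciSup_of_le ⟨_, Set.forall_mem_range.2 fun p => add_le_add (hle p.1 y₁) (hle p.2 y₂)⟩
    (vertex i₁, vertex i₂) ?_
  simp [vertex, hi₁, hi₂]

lemma max_self_neg_mul_of_nonpos {ρ u : ℝ} (hρ : 0 ≤ ρ) (hu : u ≤ 0) : max u (-ρ * u) = -ρ * u :=
  max_eq_right (by nlinarith)

lemma max_self_neg_mul_of_nonneg {ρ u : ℝ} (hρ : 0 ≤ ρ) (hu : 0 ≤ u) : max u (-ρ * u) = u :=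
  max_eq_left (by nlinarith)

lemma psi_eq_max_add_max {ρ₁ ρ₂ : ℝ} (hρ₁ : 0 ≤ ρ₁) (hρ₂ : 0 ≤ ρ₂) (t s : ℝ) :
    psi ρ₁ ρ₂ (t, s) = max t (-ρ₁ * t) + max s (-ρ₂ * s) := by
  unfold psi
  split_ifs with h₁ h₂ h₃ h₄
  · rw [max_self_neg_mul_of_nonpos hρ₁ h₁.1.le, max_self_neg_mul_of_nonpos hρ₂ h₁.2]; ring
  · rw [max_self_neg_mul_of_nonpos hρ₁ h₂.1, max_self_neg_mul_of_nonneg hρ₂ h₂.2.le]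
  · rw [max_self_neg_mul_of_nonneg hρ₁ h₃.1.le, max_self_neg_mul_of_nonneg hρ₂ h₃.2]
  · rw [max_self_neg_mul_of_nonneg hρ₁ h₄.1, max_self_neg_mul_of_nonpos hρ₂ h₄.2.le]; ring
  · obtain ⟨rfl, rfl⟩ : t = 0 ∧ s = 0 := by grind
    simp

theorem energy_eq_subspace_energy_general
    (a b c d : ℝ)
    (ha : a > max 0 (max b c)) (hd : d > max 0 (max b c))
    (ρ₁ ρ₂ : ℝ)
    (hρ₁ : ρ₁ = (d - c) / (a - b)) (hρ₂ : ρ₂ = (d - b) / (a - c))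
    (y₁ y₂ : Fin 2 → ℝ)
    (h₁ : y₁ 1 = -ρ₁ * y₁ 0) (h₂ : y₂ 1 = -ρ₂ * y₂ 0) :
    energy y₁ y₂ = psi ρ₁ ρ₂ (y₁ 0, y₂ 0) := by
  obtain ⟨-, hba, hca⟩ : 0 < a ∧ b < a ∧ c < a := by simpa only [max_lt_iff] using ha
  obtain ⟨-, hbd, hcd⟩ : 0 < d ∧ b < d ∧ c < d := by simpa only [max_lt_iff] using hd
  have hρ₁_nonneg : 0 ≤ ρ₁ := hρ₁ ▸ div_nonneg (sub_nonneg.2 hcd.le) (sub_nonneg.2 hba.le)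
  have hρ₂_nonneg : 0 ≤ ρ₂ := hρ₂ ▸ div_nonneg (sub_nonneg.2 hbd.le) (sub_nonneg.2 hca.le)
  rw [energy_eq_max_add_max, h₁, h₂, psi_eq_max_add_max hρ₁_nonneg hρ₂_nonneg]

/-- if `y = (y₁, y₂) ∈ ℝ² × ℝ²` satisfies the subspace relations
`y₁₂ = −ρ₁·y₁₁` and `y₂₂ = −ρ₂·y₂₁`, then `Ψ(y) = ψ(z)` for `z = (y₁₁, y₂₁)`. -/
theorem energy_eq_subspace_energy
    (a b c d : ℝ)
    (hdet : a * d - b * c = 0)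
    (ha : a > max 0 (max b c)) (hd : d > max 0 (max b c))
    (ρ₁ ρ₂ : ℝ)
    (hρ₁ : ρ₁ = (d - c) / (a - b)) (hρ₂ : ρ₂ = (d - b) / (a - c))
    (y₁ y₂ : Fin 2 → ℝ)
    (h₁ : y₁ 1 = -ρ₁ * y₁ 0) (h₂ : y₂ 1 = -ρ₂ * y₂ 0) :
    energy y₁ y₂ = psi ρ₁ ρ₂ (y₁ 0, y₂ 0) :=
  energy_eq_subspace_energy_general a b c d ha hd ρ₁ ρ₂ hρ₁ hρ₂ y₁ y₂ h₁ h₂
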